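/- Let X be a geodesic δ-hyperbolic metric space and let ρ be an action of a group Γ on X by isometries that is of general type and essential. If H ≤ Γ is a subgroup of finite index, then the induced action of H on X is also essential. -/

import Mathlib

open Set Metric

/-- The Gromov product `⟨x,y⟩_o = (d(x,o) + d(y,o) − d(x,y))/2`. -/
noncomputable def gromovProd {X : Type*} [PseudoMetricSpace X] (o x y : X) : ℝ :=
  (dist x o + dist y o - dist x y) / 2

/-- `α` is a unit-speed geodesic from `x` to `y`, parametrized on `[0, dist x y]`. -/
def IsGeodesicSeg {X : Type*} [PseudoMetricSpace X] (x y : X) (α : ℝ → X) : Prop :=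
  α 0 = x ∧ α (dist x y) = y ∧
    ∀ s ∈ Set.Icc (0 : ℝ) (dist x y), ∀ t ∈ Set.Icc (0 : ℝ) (dist x y),
      dist (α s) (α t) = |s - t|

/-- A metric space is geodesic if any two points are joined by a unit-speed geodesic. -/
def IsGeodesicSpace (X : Type*) [PseudoMetricSpace X] : Prop :=
  ∀ x y : X, ∃ α : ℝ → X, IsGeodesicSeg x y α

/-- `X` is `δ`-hyperbolic: for all `a b c`, geodesics `α` from `a` to `b` and `γ` from `a`
to `c` satisfy `dist (α t) (γ t) ≤ δ` for `t ∈ [0, ⟨b,c⟩_a]`. -/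
def IsDeltaHyperbolic (X : Type*) [PseudoMetricSpace X] (δ : ℝ) : Prop :=
  ∀ a b c : X, ∀ α γ : ℝ → X, IsGeodesicSeg a b α → IsGeodesicSeg a c γ →
    ∀ t ∈ Set.Icc (0 : ℝ) (gromovProd a b c), dist (α t) (γ t) ≤ δ

/-- `g` acts as a loxodromic isometry on `X`: some orbit map `n ↦ gⁿ • x₀` on `ℤ` is a
quasi-isometric embedding. -/
def IsLoxodromicOn (X : Type*) {G : Type*} [Group G] [PseudoMetricSpace X] [MulAction G X]
    (g : G) : Prop :=
  ∃ x₀ : X, ∃ C lam : ℝ, 1 ≤ C ∧ 0 ≤ lam ∧ ∀ m n : ℤ,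
    |(m : ℝ) - (n : ℝ)| / C - lam ≤ dist ((g ^ m) • x₀) ((g ^ n) • x₀) ∧
      dist ((g ^ m) • x₀) ((g ^ n) • x₀) ≤ C * |(m : ℝ) - (n : ℝ)| + lam

/-- Two loxodromics are *independent* if for some basepoint the Gromov products of all four
sign combinations of their positive powers are uniformly bounded. -/
def IndependentLox (X : Type*) {G : Type*} [Group G] [PseudoMetricSpace X] [MulAction G X]
    (g h : G) : Prop :=
  ∃ x₀ : X, ∃ B : ℝ, ∀ e e' : ℤ, (e = 1 ∨ e = -1) → (e' = 1 ∨ e' = -1) →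
    ∀ m n : ℕ, 1 ≤ m → 1 ≤ n →
      gromovProd x₀ ((g ^ (e * (m : ℤ))) • x₀) ((h ^ (e' * (n : ℤ))) • x₀) ≤ B

/-- The elements of the set `S ⊆ G` act on `X` as a general type action: `S` contains two
independent loxodromics. -/
def IsGeneralTypeOn (X : Type*) {G : Type*} [Group G] [PseudoMetricSpace X] [MulAction G X]
    (S : Set G) : Prop :=
  ∃ g ∈ S, ∃ h ∈ S, IsLoxodromicOn X g ∧ IsLoxodromicOn X h ∧ IndependentLox X g h

/-- The action of `G` on `X` is of general type. -/
def IsGeneralTypeAction (G X : Type*) [Group G] [PseudoMetricSpace X] [MulAction G X] : Prop :=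
  IsGeneralTypeOn X (Set.univ : Set G)

/-- `S` is quasiconvex: every geodesic with endpoints in `S` stays in a uniform
neighborhood of `S`. -/
def IsQuasiconvexSet {X : Type*} [PseudoMetricSpace X] (S : Set X) : Prop :=
  ∃ σ : ℝ, 0 ≤ σ ∧ ∀ x ∈ S, ∀ y ∈ S, ∀ α : ℝ → X, IsGeodesicSeg x y α →
    ∀ t ∈ Set.Icc (0 : ℝ) (dist x y), ∃ s ∈ S, dist (α t) s ≤ σ

/-- The action of the elements of `S₀ ⊆ G` on `X` is *essential*: every nonempty
`S₀`-invariant quasiconvex subset is coarsely dense. -/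
def IsEssentialOn (X : Type*) {G : Type*} [Group G] [PseudoMetricSpace X] [MulAction G X]
    (S₀ : Set G) : Prop :=
  ∀ S : Set X, S.Nonempty → (∀ g ∈ S₀, ∀ x ∈ S, g • x ∈ S) → IsQuasiconvexSet S →
    ∃ C : ℝ, 0 ≤ C ∧ ∀ x : X, ∃ s ∈ S, dist x s ≤ C

/-- The action of `G` on `X` is essential. -/
def IsEssentialAction (G X : Type*) [Group G] [PseudoMetricSpace X] [MulAction G X] : Prop :=
  IsEssentialOn X (Set.univ : Set G)


section Helpers

variable {X : Type*} [MetricSpace X]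

/-- Union of all geodesic segments from `x` to `y`. -/
def geodImage (x y : X) : Set X :=
  {p | ∃ α, IsGeodesicSeg x y α ∧ ∃ t ∈ Set.Icc (0 : ℝ) (dist x y), α t = p}

lemma IsGeodesicSeg.reverse {x y : X} {α : ℝ → X} (h : IsGeodesicSeg x y α) :
    IsGeodesicSeg y x (fun t => α (dist x y - t)) := by
  obtain ⟨h0, h1, hd⟩ := h
  refine ⟨by simp [h1], by simp [dist_comm y x, h0], ?_⟩
  intro s hs t ht
  rw [dist_comm y x] at hs ht
  have := hd (dist x y - s) ⟨by linarith [hs.2], by linarith [hs.1]⟩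
    (dist x y - t) ⟨by linarith [ht.2], by linarith [ht.1]⟩
  rw [this]
  rw [show dist x y - s - (dist x y - t) = t - s by ring, abs_sub_comm]

lemma mem_geodImage_symm {x y p : X} (h : p ∈ geodImage x y) : p ∈ geodImage y x := by
  obtain ⟨α, hα, t, ht, hp⟩ := h
  refine ⟨_, hα.reverse, dist x y - t, ?_, ?_⟩
  · rw [dist_comm y x]; exact ⟨by linarith [ht.2], by linarith [ht.1]⟩
  · simpa using hp

lemma geodImage_dist_right {x y z : X} (h : z ∈ geodImage x y) : dist z y ≤ dist x y := by
  obtain ⟨α, hα, t, ht, hp⟩ := h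
  have h2 := hα.2.2 t ht (dist x y) ⟨dist_nonneg, le_refl _⟩
  rw [hα.2.1] at h2
  rw [← hp, h2, abs_of_nonpos (by linarith [ht.2])]
  linarith [ht.1]

lemma gromovProd_nonneg (o x y : X) : 0 ≤ gromovProd o x y := by
  have := dist_triangle x o y
  unfold gromovProd
  rw [dist_comm o y] at this
  linarith

lemma gromovProd_le_dist (o x y : X) : gromovProd o x y ≤ dist x o := by
  have := dist_triangle y x o
  unfold gromovProd
  rw [dist_comm y x] at this
  linarith

lemma gromovProd_add (a b c : X) : gromovProd b a c + gromovProd c a b = dist b c := by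
  unfold gromovProd
  rw [dist_comm c b, dist_comm a c, dist_comm a b]
  ring

/-- Two geodesics with the same endpoints are uniformly `δ`-close. -/
lemma geod_close {δ : ℝ} (hhyp : IsDeltaHyperbolic X δ) {a b : X} {α γ : ℝ → X}
    (hα : IsGeodesicSeg a b α) (hγ : IsGeodesicSeg a b γ) :
    ∀ t ∈ Set.Icc (0 : ℝ) (dist a b), dist (α t) (γ t) ≤ δ := by
  intro t ht
  have hg : gromovProd a b b = dist a b := by
    unfold gromovProd; rw [dist_self, dist_comm b a]; ring
  exact hhyp a b b α γ hα hγ t (by rw [hg]; exact ht)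

/-- A side of a geodesic triangle is `δ`-close to the union of geodesics to the apex. -/
lemma thin_side {δ : ℝ} (hgeo : IsGeodesicSpace X) (hhyp : IsDeltaHyperbolic X δ)
    (a b c : X) {β : ℝ → X} (hβ : IsGeodesicSeg b c β) :
    ∀ t ∈ Set.Icc (0 : ℝ) (dist b c),
      ∃ z, (z ∈ geodImage b a ∨ z ∈ geodImage c a) ∧ dist (β t) z ≤ δ := by
  intro t ht
  by_cases hcase : t ≤ gromovProd b a c
  · obtain ⟨α, hα⟩ := hgeo b a
    refine ⟨α t, Or.inl ⟨α, hα, t, ⟨ht.1, ?_⟩, rfl⟩, ?_⟩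
    · exact hcase.trans (by simpa [dist_comm] using gromovProd_le_dist b a c)
    · rw [dist_comm]; exact hhyp b a c α β hα hβ t ⟨ht.1, hcase⟩
  · obtain ⟨γ, hγ⟩ := hgeo c a
    push_neg at hcase
    have hsum := gromovProd_add a b c
    have hu : dist b c - t ∈ Set.Icc (0 : ℝ) (gromovProd c a b) :=
      ⟨by linarith [ht.2], by linarith⟩
    have hclose := hhyp c a b γ (fun u => β (dist b c - u)) hγ hβ.reverse
      (dist b c - t) hu
    simp only [sub_sub_cancel] at hclose
    refine ⟨γ (dist b c - t), Or.inr ⟨γ, hγ, dist b c - t, ⟨hu.1, ?_⟩, rfl⟩, ?_⟩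
    · exact hu.2.trans (by simpa [dist_comm] using gromovProd_le_dist c a b)
    · rw [dist_comm]; exact hclose

/-- A geodesic restricted up to a point on it is a geodesic to that point. -/
lemma IsGeodesicSeg.restrict {c d x : X} {μ : ℝ → X} (hμ : IsGeodesicSeg c d μ) {s : ℝ}
    (hs : s ∈ Set.Icc (0 : ℝ) (dist c d)) (hx : μ s = x) :
    IsGeodesicSeg c x μ ∧ dist c x = s := by
  have hdcx : dist c x = s := by
    rw [← hx, ← hμ.1]
    rw [hμ.2.2 0 ⟨le_refl _, dist_nonneg⟩ s hs]
    rw [abs_of_nonpos (by linarith [hs.1])]; ring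
  refine ⟨⟨hμ.1, by rw [hdcx, hx], ?_⟩, hdcx⟩
  intro s' hs' t' ht'
  rw [hdcx] at hs' ht'
  exact hμ.2.2 s' ⟨hs'.1, hs'.2.trans hs.2⟩ t' ⟨ht'.1, ht'.2.trans hs.2⟩

/-- Any geodesic from `c` to a point `x` on a geodesic `μ` from `c` stays `δ`-close to `μ`. -/
lemma sub_geod_close {δ : ℝ} (hhyp : IsDeltaHyperbolic X δ) {c d x : X} {μ : ℝ → X}
    (hμ : IsGeodesicSeg c d μ) {s : ℝ} (hs : s ∈ Set.Icc (0 : ℝ) (dist c d))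
    (hx : μ s = x) {z : X} (hz : z ∈ geodImage c x) :
    ∃ u ∈ Set.Icc (0 : ℝ) s, dist z (μ u) ≤ δ := by
  obtain ⟨hres, hdcx⟩ := hμ.restrict hs hx
  obtain ⟨α, hα, t, ht, hp⟩ := hz
  rw [hdcx] at ht
  refine ⟨t, ht, ?_⟩
  rw [← hp]
  exact geod_close hhyp hα hres t (by rw [hdcx]; exact ht)

end Helpers

/-- If an action of `Γ` on a geodesic `δ`-hyperbolic space is of general
type and essential, then the restricted action of any finite-index subgroup is essential. -/
theorem finite_index_essential
    (X : Type*) [MetricSpace X] (Γ : Type*) [Group Γ] [MulAction Γ X]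
    (hiso : ∀ (g : Γ) (x y : X), dist (g • x) (g • y) = dist x y)
    (δ : ℝ) (hδ : 0 ≤ δ)
    (hgeo : IsGeodesicSpace X) (hhyp : IsDeltaHyperbolic X δ)
    (hgt : IsGeneralTypeAction Γ X) (hess : IsEssentialAction Γ X)
    (H : Subgroup Γ) (hfi : H.FiniteIndex) :
    IsEssentialOn X (H : Set Γ) := by
  intro S hSne hSinv hSqc
  obtain ⟨s₀, hs₀⟩ := hSne
  obtain ⟨σ, hσ0, hσ⟩ := hSqc
  -- the action preserves geodesics
  have hsmul : ∀ (g : Γ) (x y : X) (α : ℝ → X), IsGeodesicSeg x y α →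
      IsGeodesicSeg (g • x) (g • y) (fun t => g • α t) := by
    intro g x y α hα
    refine ⟨?_, ?_, ?_⟩
    · show g • α 0 = g • x
      rw [hα.1]
    · show g • α (dist (g • x) (g • y)) = g • y
      rw [hiso g x y, hα.2.1]
    · intro s hs t ht
      rw [hiso g x y] at hs ht
      show dist (g • α s) (g • α t) = |s - t|
      rw [hiso]
      exact hα.2.2 s hs t ht
  -- `T` : the union of all geodesics between `Γ`-orbit points of `s₀`
  set T : Set X := {p | ∃ γ₁ γ₂ : Γ, p ∈ geodImage (γ₁ • s₀) (γ₂ • s₀)} with hTdef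
  have horbT : ∀ γ : Γ, (γ : Γ) • s₀ ∈ T := by
    intro γ
    obtain ⟨α, hα⟩ := hgeo (γ • s₀) (γ • s₀)
    exact ⟨γ, γ, α, hα, 0, ⟨le_refl _, dist_nonneg⟩, hα.1⟩
  have hTinv : ∀ g : Γ, ∀ p ∈ T, g • p ∈ T := by
    rintro g p ⟨γ₁, γ₂, α, hα, t, ht, hp⟩
    refine ⟨g * γ₁, g * γ₂, fun u => g • α u, ?_, t, ?_, show g • α t = g • p by rw [hp]⟩
    · rw [mul_smul, mul_smul]; exact hsmul g _ _ α hα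
    · rw [mul_smul, mul_smul, hiso g]; exact ht
  -- `T` is quasiconvex with constant `3δ`
  have hTqc : IsQuasiconvexSet T := by
    refine ⟨3 * δ, by linarith, ?_⟩
    rintro x ⟨γ₁, γ₂, μ₀, hμ₀, s, hs, hxs⟩ y ⟨γ₃, γ₄, μ₁, hμ₁, s₁, hs₁, hys⟩ μ hμ t ht
    obtain ⟨z₁, hz₁mem, hz₁⟩ := thin_side hgeo hhyp (γ₁ • s₀) x y hμ t ht
    rcases hz₁mem with h1 | h1
    · -- z₁ on a geodesic from x back to γ₁ • s₀
      obtain ⟨u, hu, hzw⟩ := sub_geod_close hhyp hμ₀ hs hxs (mem_geodImage_symm h1)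
      refine ⟨μ₀ u, ⟨γ₁, γ₂, μ₀, hμ₀, u, ⟨hu.1, hu.2.trans hs.2⟩, rfl⟩, ?_⟩
      calc dist (μ t) (μ₀ u) ≤ dist (μ t) z₁ + dist z₁ (μ₀ u) := dist_triangle _ _ _
        _ ≤ 3 * δ := by linarith
    · obtain ⟨ν, hν, u₁, hu₁, hz⟩ := h1
      obtain ⟨z₂, hz₂mem, hz₂⟩ := thin_side hgeo hhyp (γ₃ • s₀) y (γ₁ • s₀) hν u₁ hu₁
      rw [hz] at hz₂
      rcases hz₂mem with h2 | h2
      · -- z₂ on a geodesic from y back to γ₃ • s₀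
        obtain ⟨u, hu, hzw⟩ := sub_geod_close hhyp hμ₁ hs₁ hys (mem_geodImage_symm h2)
        refine ⟨μ₁ u, ⟨γ₃, γ₄, μ₁, hμ₁, u, ⟨hu.1, hu.2.trans hs₁.2⟩, rfl⟩, ?_⟩
        calc dist (μ t) (μ₁ u) ≤ dist (μ t) z₁ + dist z₁ (μ₁ u) := dist_triangle _ _ _
          _ ≤ dist (μ t) z₁ + (dist z₁ z₂ + dist z₂ (μ₁ u)) := by
              linarith [dist_triangle z₁ z₂ (μ₁ u)]
          _ ≤ 3 * δ := by linarith
      · -- z₂ on a geodesic between orbit points: in `T`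
        refine ⟨z₂, ⟨γ₁, γ₃, h2⟩, ?_⟩
        calc dist (μ t) z₂ ≤ dist (μ t) z₁ + dist z₁ z₂ := dist_triangle _ _ _
          _ ≤ 3 * δ := by linarith
  -- essentiality of the `Γ`-action applied to `T`
  obtain ⟨C, hC0, hC⟩ := hess T ⟨(1 : Γ) • s₀, horbT 1⟩
    (fun g _ p hp => hTinv g p hp) hTqc
  -- every `Γ`-orbit point of `s₀` is within `R` of `S`
  haveI := hfi
  haveI : Finite (Γ ⧸ H) := Subgroup.finite_quotient_of_finiteIndex
  obtain ⟨R, hR⟩ := (Set.finite_range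
    (fun q : Γ ⧸ H => dist ((Quotient.out q)⁻¹ • s₀) s₀)).bddAbove
  have hR0 : 0 ≤ R := le_trans dist_nonneg (hR (Set.mem_range_self (QuotientGroup.mk 1)))
  have horbS : ∀ γ : Γ, ∃ p ∈ S, dist (γ • s₀) p ≤ R := by
    intro γ
    obtain ⟨h, hh⟩ := QuotientGroup.mk_out_eq_mul H γ⁻¹
    refine ⟨(h : Γ) • s₀, hSinv h h.2 s₀ hs₀, ?_⟩
    have hγ : γ = (h : Γ) * (QuotientGroup.mk γ⁻¹ : Γ ⧸ H).out⁻¹ := by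
      rw [hh]; group
    calc dist (γ • s₀) ((h : Γ) • s₀)
        = dist (((h : Γ) * (QuotientGroup.mk γ⁻¹ : Γ ⧸ H).out⁻¹) • s₀) ((h : Γ) • s₀) := by
          rw [← hγ]
      _ = dist ((QuotientGroup.mk γ⁻¹ : Γ ⧸ H).out⁻¹ • s₀) s₀ := by
          rw [mul_smul, hiso]
      _ ≤ R := hR (Set.mem_range_self (QuotientGroup.mk γ⁻¹))
  -- every point of `T` is within `R + σ + 2δ` of `S`
  have hTS : ∀ p ∈ T, ∃ s ∈ S, dist p s ≤ R + σ + 2 * δ := by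
    rintro p ⟨γ₁, γ₂, μ, hμ, t, ht, hp⟩
    obtain ⟨pa, hpaS, hpa⟩ := horbS γ₁
    obtain ⟨pb, hpbS, hpb⟩ := horbS γ₂
    obtain ⟨z₁, hz₁mem, hz₁⟩ := thin_side hgeo hhyp pa (γ₁ • s₀) (γ₂ • s₀) hμ t ht
    rw [hp] at hz₁
    rcases hz₁mem with h1 | h1
    · have hd := geodImage_dist_right h1
      refine ⟨pa, hpaS, ?_⟩
      calc dist p pa ≤ dist p z₁ + dist z₁ pa := dist_triangle _ _ _
        _ ≤ R + σ + 2 * δ := by linarith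
    · obtain ⟨ν, hν, u, hu, hz⟩ := h1
      obtain ⟨z₂, hz₂mem, hz₂⟩ := thin_side hgeo hhyp pb (γ₂ • s₀) pa hν u hu
      rw [hz] at hz₂
      rcases hz₂mem with h2 | h2
      · have hd := geodImage_dist_right h2
        refine ⟨pb, hpbS, ?_⟩
        calc dist p pb ≤ dist p z₁ + (dist z₁ z₂ + dist z₂ pb) := by
              linarith [dist_triangle p z₁ pb, dist_triangle z₁ z₂ pb]
          _ ≤ R + σ + 2 * δ := by linarith
      · obtain ⟨α, hα, v, hv, hzv⟩ := h2
        obtain ⟨s, hsS, hss⟩ := hσ pa hpaS pb hpbS α hα v hv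
        rw [hzv] at hss
        refine ⟨s, hsS, ?_⟩
        calc dist p s ≤ dist p z₁ + (dist z₁ z₂ + dist z₂ s) := by
              linarith [dist_triangle p z₁ s, dist_triangle z₁ z₂ s]
          _ ≤ R + σ + 2 * δ := by linarith
  refine ⟨C + (R + σ + 2 * δ), by linarith, fun x => ?_⟩
  obtain ⟨p, hpT, hxp⟩ := hC x
  obtain ⟨s, hsS, hps⟩ := hTS p hpT
  exact ⟨s, hsS, (dist_triangle x p s).trans (by linarith)⟩
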